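/- Let l1, l2, l3 > 0 with l1 + l2 + l3 = 1, l3 < l1, l3 < l2, and max(l1,l2) < τ ≤ 1/2, and let F = F_τ^{l1,l2,l3}. With J1 = (l3, l1), J2 = (l1, l1+l2−l3), J3' = (l1+l2−l3, l1+τ−l3), J3'' = (τ−l2, l3), the following inclusions hold: J1 ⊆ I1; J2 ⊆ I2; J3' ⊆ I2, F(J3') ⊆ I1 and F²(J3') ⊆ I3; J3'' ⊆ I1, F(J3'') ⊆ I2 and F²(J3'') ⊆ I3. Thus along one passage of the first return to S3 = (τ−l2, l1+τ−l3), a point of J1 contributes the itinerary symbol a, a point of J2 the symbol b, and a point of J3' (respectively J3'') contributes the three symbols b,a,c (respectively a,b,c), realizing the substitution σ3 relating the symbolic codes of F and of its renormalization. -/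

import Mathlib

/-! The point `x ∈ J3'` lies in `I2` and is sent to `2 l1 + l2 + τ - 1 - x ∈ I1` (after a wrap
around the circle), then to `x + l3 ∈ I3`; the point `x ∈ J3''` lies in `I1` and is sent to
`l1 + τ - x ∈ I2`, then to `l1 + l2 + x ∈ I3`. Each inclusion is linear arithmetic in the
hypotheses, using `τ ≤ 1/2 < l2 + l3`. -/

open Set

noncomputable section

local instance : Fact ((0:ℝ) < 1) := ⟨one_pos⟩

/-- Representative in `[0,1)` of a point of the circle `ℝ/ℤ`. -/
def rep (x : AddCircle (1:ℝ)) : ℝ := (AddCircle.equivIco 1 0 x : ℝ)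

/-- Projection `ℝ → ℝ/ℤ`. -/
def toCirc (t : ℝ) : AddCircle (1:ℝ) := (t : AddCircle (1:ℝ))

/-- The fully flipped 3-interval exchange transformation `F_τ^{l1,l2,l3}`
(it depends only on `l1`, `l2`, `τ`, since `l3 = 1 - l1 - l2`). -/
def FF (l1 l2 τ : ℝ) (x : AddCircle (1:ℝ)) : AddCircle (1:ℝ) :=
  if rep x < l1 then toCirc (l1 - rep x + τ)
  else if rep x < l1 + l2 then toCirc (2*l1 + l2 - rep x + τ)
  else toCirc (l1 + l2 + 1 - rep x + τ)

lemma rep_toCirc {t : ℝ} (h0 : 0 ≤ t) (h1 : t < 1) : rep (toCirc t) = t := by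
  rw [rep, toCirc, AddCircle.coe_equivIco_mk_apply, div_one, mul_one, Int.fract_eq_self]
  exact ⟨h0, h1⟩

lemma toCirc_sub_one (t : ℝ) : toCirc (t - 1) = toCirc t := by
  rw [toCirc, toCirc, ← AddCircle.coe_add_period (1 : ℝ) (t - 1), sub_add_cancel]

lemma FF_toCirc_of_lt {l1 l2 τ t : ℝ} (h0 : 0 ≤ t) (ht : t < l1) (h1 : l1 ≤ 1) :
    FF l1 l2 τ (toCirc t) = toCirc (l1 - t + τ) := by
  rw [FF, rep_toCirc h0 (ht.trans_le h1), if_pos ht]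

lemma FF_toCirc_of_le_of_lt {l1 l2 τ t : ℝ} (h0 : 0 ≤ l1) (hl : l1 ≤ t) (ht : t < l1 + l2)
    (h1 : l1 + l2 ≤ 1) : FF l1 l2 τ (toCirc t) = toCirc (2*l1 + l2 - t + τ) := by
  rw [FF, rep_toCirc (h0.trans hl) (ht.trans_le h1), if_neg hl.not_gt, if_pos ht]

lemma itinerary_of_mem_J3' {l1 l2 l3 τ x : ℝ} (h1 : 0 < l1)
    (hsum : l1 + l2 + l3 = 1) (h32 : l3 < l2) (hl1 : l1 < τ) (hτ : τ ≤ 1/2)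
    (hx : x ∈ Ioo (l1 + l2 - l3) (l1 + τ - l3)) :
    toCirc x ∈ toCirc '' Ioo l1 (l1 + l2) ∧
    FF l1 l2 τ (toCirc x) ∈ toCirc '' Ioo 0 l1 ∧
    (FF l1 l2 τ)^[2] (toCirc x) ∈ toCirc '' Ioo (l1 + l2) 1 := by
  obtain ⟨hx₁, hx₂⟩ := hx
  have hFx : FF l1 l2 τ (toCirc x) = toCirc (2*l1 + l2 + τ - 1 - x) := by
    rw [FF_toCirc_of_le_of_lt h1.le (by linarith) (by linarith) (by linarith),
      ← toCirc_sub_one]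
    ring_nf
  have hF2x : FF l1 l2 τ (toCirc (2*l1 + l2 + τ - 1 - x)) = toCirc (x + l3) := by
    rw [FF_toCirc_of_lt (by linarith) (by linarith) (by linarith)]
    congr 1
    linarith
  refine ⟨mem_image_of_mem _ ⟨by linarith, by linarith⟩, ?_, ?_⟩
  · rw [hFx]
    exact mem_image_of_mem _ ⟨by linarith, by linarith⟩
  · rw [Function.iterate_succ_apply', Function.iterate_one, hFx, hF2x]
    exact mem_image_of_mem _ ⟨by linarith, by linarith⟩

lemma itinerary_of_mem_J3'' {l1 l2 l3 τ x : ℝ} (hsum : l1 + l2 + l3 = 1)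
    (h31 : l3 < l1) (hl1 : l1 < τ) (hl2 : l2 < τ) (hx : x ∈ Ioo (τ - l2) l3) :
    toCirc x ∈ toCirc '' Ioo 0 l1 ∧
    FF l1 l2 τ (toCirc x) ∈ toCirc '' Ioo l1 (l1 + l2) ∧
    (FF l1 l2 τ)^[2] (toCirc x) ∈ toCirc '' Ioo (l1 + l2) 1 := by
  obtain ⟨hx₁, hx₂⟩ := hx
  have hFx : FF l1 l2 τ (toCirc x) = toCirc (l1 - x + τ) :=
    FF_toCirc_of_lt (by linarith) (by linarith) (by linarith)
  have hF2x : FF l1 l2 τ (toCirc (l1 - x + τ)) = toCirc (l1 + l2 + x) := by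
    rw [FF_toCirc_of_le_of_lt (by linarith) (by linarith) (by linarith) (by linarith)]
    ring_nf
  refine ⟨mem_image_of_mem _ ⟨by linarith, by linarith⟩, ?_, ?_⟩
  · rw [hFx]
    exact mem_image_of_mem _ ⟨by linarith, by linarith⟩
  · rw [Function.iterate_succ_apply', Function.iterate_one, hFx, hF2x]
    exact mem_image_of_mem _ ⟨by linarith, by linarith⟩

theorem statement14_general (l1 l2 l3 τ : ℝ)
    (h1 : 0 < l1) (h3 : 0 < l3) (hsum : l1 + l2 + l3 = 1)
    (h31 : l3 < l1) (h32 : l3 < l2) (hτmax : max l1 l2 < τ) (hτ : τ ≤ 1/2) :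
    -- J1 = (l3, l1) ⊆ I1
    (∀ x ∈ Ioo l3 l1, toCirc x ∈ toCirc '' Ioo 0 l1) ∧
    -- J2 = (l1, l1+l2-l3) ⊆ I2
    (∀ x ∈ Ioo l1 (l1 + l2 - l3), toCirc x ∈ toCirc '' Ioo l1 (l1 + l2)) ∧
    -- J3' = (l1+l2-l3, l1+τ-l3): itinerary  b, a, c
    (∀ x ∈ Ioo (l1 + l2 - l3) (l1 + τ - l3),
        toCirc x ∈ toCirc '' Ioo l1 (l1 + l2) ∧
        FF l1 l2 τ (toCirc x) ∈ toCirc '' Ioo 0 l1 ∧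
        (FF l1 l2 τ)^[2] (toCirc x) ∈ toCirc '' Ioo (l1 + l2) 1) ∧
    -- J3'' = (τ-l2, l3): itinerary  a, b, c
    (∀ x ∈ Ioo (τ - l2) l3,
        toCirc x ∈ toCirc '' Ioo 0 l1 ∧
        FF l1 l2 τ (toCirc x) ∈ toCirc '' Ioo l1 (l1 + l2) ∧
        (FF l1 l2 τ)^[2] (toCirc x) ∈ toCirc '' Ioo (l1 + l2) 1) := by
  obtain ⟨hl1, hl2⟩ := max_lt_iff.mp hτmax
  refine ⟨fun x hx => mem_image_of_mem _ ⟨h3.trans hx.1, hx.2⟩,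
    fun x hx => mem_image_of_mem _ ⟨hx.1, by linarith [hx.2]⟩,
    fun x => itinerary_of_mem_J3' h1 hsum h32 hl1 hτ,
    fun x => itinerary_of_mem_J3'' hsum h31 hl1 hl2⟩

/-- Itineraries of one passage of the first return map to `S3`: points of `J1` visit
`I1` (symbol `a`), points of `J2` visit `I2` (symbol `b`), points of `J3'` visit
`I2, I1, I3` (symbols `b,a,c`), and points of `J3''` visit `I1, I2, I3` (symbols
`a,b,c`), realizing the substitution `σ3`. -/
theorem statement14 (l1 l2 l3 τ : ℝ)
    (h1 : 0 < l1) (h2 : 0 < l2) (h3 : 0 < l3) (hsum : l1 + l2 + l3 = 1)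
    (h31 : l3 < l1) (h32 : l3 < l2) (hτmax : max l1 l2 < τ) (hτ : τ ≤ 1/2) :
    -- J1 = (l3, l1) ⊆ I1
    (∀ x ∈ Ioo l3 l1, toCirc x ∈ toCirc '' Ioo 0 l1) ∧
    -- J2 = (l1, l1+l2-l3) ⊆ I2
    (∀ x ∈ Ioo l1 (l1 + l2 - l3), toCirc x ∈ toCirc '' Ioo l1 (l1 + l2)) ∧
    -- J3' = (l1+l2-l3, l1+τ-l3): itinerary  b, a, c
    (∀ x ∈ Ioo (l1 + l2 - l3) (l1 + τ - l3),
        toCirc x ∈ toCirc '' Ioo l1 (l1 + l2) ∧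
        FF l1 l2 τ (toCirc x) ∈ toCirc '' Ioo 0 l1 ∧
        (FF l1 l2 τ)^[2] (toCirc x) ∈ toCirc '' Ioo (l1 + l2) 1) ∧
    -- J3'' = (τ-l2, l3): itinerary  a, b, c
    (∀ x ∈ Ioo (τ - l2) l3,
        toCirc x ∈ toCirc '' Ioo 0 l1 ∧
        FF l1 l2 τ (toCirc x) ∈ toCirc '' Ioo l1 (l1 + l2) ∧
        (FF l1 l2 τ)^[2] (toCirc x) ∈ toCirc '' Ioo (l1 + l2) 1) :=
  statement14_general l1 l2 l3 τ h1 h3 hsum h31 h32 hτmax hτ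

end
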